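/- The two-dimensional Euler–Poisson expression E has the required affine shape with self-adjoint coefficients: define for v ∈ ℝ² the matrices 𝒜_{ab}(v) = ε_{ab}·(1 + ‖v‖²)^{−3/2} (where ε₁₂ = 1 = −ε₂₁, ε₁₁ = ε₂₂ = 0) and B_{ab}(v) = m·((1 + ‖v‖²)δ_{ab} − v_a v_b)·(1 + ‖v‖²)^{−3/2}, and c(v) = 0. Then (i) for all v, v′, v″ ∈ ℝ², E(v, v′, v″) = 𝒜(v)·v″ + ((v′·∂_v)𝒜)(v)·v′ + B(v)·v′ + c(v), where ((v′·∂_v)𝒜)_{ab} = Σ_c v′^c·∂𝒜_{ab}/∂v^c; and (ii) these coefficients satisfy the self-adjointness (Helmholtz-type) conditions, which for t- and x-independent coefficients reduce to: 𝒜 is skew-symmetric, B is symmetric, and ∂B_{bc}/∂v_a = ∂B_{ac}/∂v_b for all a, b, c ∈ {1, 2}. -/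

import Mathlib

noncomputable section
open RealInnerProductSpace

/-- Two-dimensional Euclidean space. -/
abbrev E2 := EuclideanSpace ℝ (Fin 2)

/-- The duality operation ∗(w₁, w₂) = (−w₂, w₁) on ℝ². -/
def star2 (w : E2) : E2 :=
  (WithLp.equiv 2 (Fin 2 → ℝ)).symm ![-(w 1), w 0]

/-- The two-dimensional Euler–Poisson expression
E(v, v′, v″) = −(∗v″)/(1 + ‖v‖²)^{3/2} + 3(v′·v)(∗v′)/(1 + ‖v‖²)^{5/2}
+ m((1 + ‖v‖²)v′ − (v′·v)v)/(1 + ‖v‖²)^{3/2}. -/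
def EP2d (m : ℝ) (v v' v'' : E2) : E2 :=
  -(((1 + ‖v‖ ^ 2) ^ ((3 : ℝ) / 2))⁻¹ • star2 v'')
    + (3 * ⟪v', v⟫ / (1 + ‖v‖ ^ 2) ^ ((5 : ℝ) / 2)) • star2 v'
    + (m / (1 + ‖v‖ ^ 2) ^ ((3 : ℝ) / 2)) • ((1 + ‖v‖ ^ 2) • v' - ⟪v', v⟫ • v)

/-- The skew-symmetric Levi-Civita symbol ε on ℝ², with ε₁₂ = 1 = −ε₂₁. -/
def eps : Fin 2 → Fin 2 → ℝ := ![![0, 1], ![-1, 0]]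

/-- The matrix 𝒜_{ab}(v) = ε_{ab}(1 + ‖v‖²)^{−3/2}. -/
def Acoef (v : E2) (a b : Fin 2) : ℝ :=
  eps a b * (1 + ‖v‖ ^ 2) ^ (-(3 : ℝ) / 2)

/-- The matrix B_{ab}(v) = m((1 + ‖v‖²)δ_{ab} − v_a v_b)(1 + ‖v‖²)^{−3/2}. -/
def Bcoef (m : ℝ) (v : E2) (a b : Fin 2) : ℝ :=
  m * ((1 + ‖v‖ ^ 2) * (if a = b then (1 : ℝ) else 0) - v a * v b)
    * (1 + ‖v‖ ^ 2) ^ (-(3 : ℝ) / 2)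

/-!
Write `ρ = 1 + ‖v‖²`. Since `∑_b ε_{ab} w_b = -(∗w)_a`, the term `𝒜 v″` is `-ρ^{-3/2} ∗v″`,
and differentiating `ρ^{-3/2}` along `v′` gives `-3 (v·v′) ρ^{-5/2}`, which produces the
`3 (v′·v) ∗v′ / ρ^{5/2}` term; `B v′` is the `m`-term by inspection. For the Helmholtz condition,
`∂_u B_{bc} = m ρ^{-5/2} (3 v_b v_c (v·u) - ρ (δ_{bc} (v·u) + u_b v_c + v_b u_c))`, which for
`u = e_a` is totally symmetric in `a, b, c`.
-/

section OnePlusNormSq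

variable {F : Type*} [NormedAddCommGroup F]

theorem hasFDerivAt_one_add_norm_sq_rpow [InnerProductSpace ℝ F] (p : ℝ) (v : F) :
    HasFDerivAt (fun w : F => (1 + ‖w‖ ^ 2) ^ p)
      ((2 * p * (1 + ‖v‖ ^ 2) ^ (p - 1)) • innerSL ℝ v) v := by
  convert (((hasFDerivAt_id v).norm_sq).const_add 1).rpow_const (p := p)
    (Or.inl (by positivity)) using 1
  · rfl
  ext u
  simp only [smul_apply, coe_innerSL_apply, smul_eq_mul, id_eq, ContinuousLinearMap.comp_id,
    nsmul_eq_mul, Nat.cast_ofNat]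
  ring

theorem one_add_norm_sq_mul_rpow_sub_one (p : ℝ) (v : F) :
    (1 + ‖v‖ ^ 2) * (1 + ‖v‖ ^ 2) ^ (p - 1) = (1 + ‖v‖ ^ 2) ^ p := by
  rw [Real.rpow_sub_one (by positivity), mul_div_cancel₀ _ (by positivity)]

end OnePlusNormSq

theorem sum_eps_mul (w : E2) (a : Fin 2) : ∑ b, eps a b * w b = -star2 w a := by
  fin_cases a <;> simp [eps, star2, Fin.sum_univ_two]

theorem Acoef_antisymm (v : E2) (a b : Fin 2) : Acoef v a b = -Acoef v b a := by
  fin_cases a <;> fin_cases b <;> simp [Acoef, eps]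

theorem fderiv_Acoef (v u : E2) (a b : Fin 2) :
    fderiv ℝ (fun w : E2 => Acoef w a b) v u
      = -3 * eps a b * (1 + ‖v‖ ^ 2) ^ (-(3 : ℝ) / 2 - 1) * ⟪v, u⟫ := by
  have h : HasFDerivAt (fun w : E2 => Acoef w a b) _ v :=
    (hasFDerivAt_one_add_norm_sq_rpow (-(3 : ℝ) / 2) v).const_mul (eps a b)
  rw [h.fderiv]
  simp only [smul_apply, coe_innerSL_apply, smul_eq_mul]
  ring

theorem Bcoef_symm (m : ℝ) (v : E2) (a b : Fin 2) : Bcoef m v a b = Bcoef m v b a := by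
  simp only [Bcoef, eq_comm (a := a), mul_comm (v a)]

theorem sum_Bcoef_mul (m : ℝ) (v w : E2) (a : Fin 2) :
    ∑ b, Bcoef m v a b * w b
      = m * ((1 + ‖v‖ ^ 2) * w a - ⟪w, v⟫ * v a) * (1 + ‖v‖ ^ 2) ^ (-(3 : ℝ) / 2) := by
  fin_cases a <;> simp [Bcoef, Fin.sum_univ_two, PiLp.inner_apply] <;> ring

theorem fderiv_Bcoef (m : ℝ) (v u : E2) (b c : Fin 2) :
    fderiv ℝ (fun w : E2 => Bcoef m w b c) v u
      = m * (1 + ‖v‖ ^ 2) ^ (-(3 : ℝ) / 2 - 1)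
        * (3 * v b * v c * ⟪v, u⟫
          - (1 + ‖v‖ ^ 2) * ((if b = c then 1 else 0) * ⟪v, u⟫ + u b * v c + v b * u c)) := by
  have hρ := ((hasFDerivAt_id v).norm_sq).const_add 1
  have hb := (EuclideanSpace.proj (𝕜 := ℝ) b).hasFDerivAt (x := v)
  have hc := (EuclideanSpace.proj (𝕜 := ℝ) c).hasFDerivAt (x := v)
  have h : HasFDerivAt (fun w : E2 => Bcoef m w b c) _ v :=
    (((hρ.mul_const (if b = c then (1 : ℝ) else 0)).sub (hb.mul hc)).const_mul m).mul
      (hasFDerivAt_one_add_norm_sq_rpow (-(3 : ℝ) / 2) v)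
  rw [h.fderiv, ← one_add_norm_sq_mul_rpow_sub_one (-(3 : ℝ) / 2) v]
  generalize (if b = c then (1 : ℝ) else 0) = δ
  simp only [id_eq, EuclideanSpace.coe_proj, Pi.sub_apply, Pi.mul_apply, ContinuousLinearMap.comp_id,
    two_smul, smul_add, PiLp.proj_apply, add_apply, smul_apply, coe_innerSL_apply, smul_eq_mul,
    sub_apply]
  ring

theorem EP2d_apply_eq_affine (m : ℝ) (v v' v'' : E2) (a : Fin 2) :
    EP2d m v v' v'' a
      = (∑ b : Fin 2, Acoef v a b * v'' b)
        + (∑ b : Fin 2, (fderiv ℝ (fun w : E2 => Acoef w a b) v v') * v' b)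
        + (∑ b : Fin 2, Bcoef m v a b * v' b) := by
  have hρ : 0 ≤ 1 + ‖v‖ ^ 2 := by positivity
  have h3 : (1 + ‖v‖ ^ 2) ^ (-(3 : ℝ) / 2) = ((1 + ‖v‖ ^ 2) ^ ((3 : ℝ) / 2))⁻¹ := by
    rw [neg_div, Real.rpow_neg hρ]
  have h5 : (1 + ‖v‖ ^ 2) ^ (-(3 : ℝ) / 2 - 1) = ((1 + ‖v‖ ^ 2) ^ ((5 : ℝ) / 2))⁻¹ := by
    rw [← Real.rpow_neg hρ]; norm_num
  have hA : ∑ b, Acoef v a b * v'' b = -((1 + ‖v‖ ^ 2) ^ (-(3 : ℝ) / 2) * star2 v'' a) := by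
    simp only [Acoef, mul_right_comm _ _ (v'' _), ← Finset.sum_mul, sum_eps_mul, neg_mul, mul_comm]
  have hdA : ∑ b, fderiv ℝ (fun w : E2 => Acoef w a b) v v' * v' b
      = 3 * ⟪v', v⟫ * (1 + ‖v‖ ^ 2) ^ (-(3 : ℝ) / 2 - 1) * star2 v' a := by
    calc ∑ b, fderiv ℝ (fun w : E2 => Acoef w a b) v v' * v' b
        = -3 * (1 + ‖v‖ ^ 2) ^ (-(3 : ℝ) / 2 - 1) * ⟪v, v'⟫ * ∑ b, eps a b * v' b := by
          rw [Finset.mul_sum]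
          exact Finset.sum_congr rfl fun b _ => by rw [fderiv_Acoef]; ring
      _ = _ := by rw [sum_eps_mul, real_inner_comm]; ring
  rw [hA, hdA, sum_Bcoef_mul, h3, h5]
  simp only [EP2d, PiLp.add_apply, PiLp.neg_apply, PiLp.smul_apply, smul_eq_mul, PiLp.sub_apply]
  ring

theorem fderiv_Bcoef_single_comm (m : ℝ) (v : E2) (a b c : Fin 2) :
    fderiv ℝ (fun w : E2 => Bcoef m w b c) v (EuclideanSpace.single a 1)
      = fderiv ℝ (fun w : E2 => Bcoef m w a c) v (EuclideanSpace.single b 1) := by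
  simp only [fderiv_Bcoef, EuclideanSpace.inner_single_right, PiLp.single_apply, conj_trivial,
    @eq_comm _ b a, @eq_comm _ c a, @eq_comm _ c b]
  ring

/-- the two-dimensional Euler–Poisson expression E has the affine shape
E = 𝒜·v″ + ((v′·∂_v)𝒜)·v′ + B·v′ + c with c = 0, where 𝒜 is skew-symmetric, B is
symmetric, and ∂B_{bc}/∂v_a = ∂B_{ac}/∂v_b (the Helmholtz self-adjointness
conditions for t- and x-independent coefficients). -/
theorem EP2d_affine_shape_and_selfadjointness (m : ℝ) :
    (∀ (v v' v'' : E2) (a : Fin 2),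
      EP2d m v v' v'' a
        = (∑ b : Fin 2, Acoef v a b * v'' b)
          + (∑ b : Fin 2, (fderiv ℝ (fun w : E2 => Acoef w a b) v v') * v' b)
          + (∑ b : Fin 2, Bcoef m v a b * v' b) + 0) ∧
    (∀ (v : E2) (a b : Fin 2), Acoef v a b = -Acoef v b a) ∧
    (∀ (v : E2) (a b : Fin 2), Bcoef m v a b = Bcoef m v b a) ∧
    (∀ (v : E2) (a b c : Fin 2),
      fderiv ℝ (fun w : E2 => Bcoef m w b c) v (EuclideanSpace.single a 1)
        = fderiv ℝ (fun w : E2 => Bcoef m w a c) v (EuclideanSpace.single b 1)) :=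
  ⟨fun v v' v'' a => (EP2d_apply_eq_affine m v v' v'' a).trans (add_zero _).symm,
    Acoef_antisymm, Bcoef_symm m, fderiv_Bcoef_single_comm m⟩
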